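/- For all positive integers m and n ≥ 0, Raabe's multiplication formula holds: Σ_{k=0}^{m-1} B_n(x + k/m) = m^{1-n}·B_n(m·x) for all real x. -/

import Mathlib

noncomputable def B (n : ℕ) : Polynomial ℝ :=
  (Polynomial.bernoulli n).map (algebraMap ℚ ℝ)

open PowerSeries Finset

noncomputable def bernGF (t : ℝ) : PowerSeries ℝ :=
  PowerSeries.mk fun n => Polynomial.aeval t ((1 / n.factorial : ℚ) • Polynomial.bernoulli n)

lemma bernGF_spec (t : ℝ) :
    bernGF t * (exp ℝ - 1) = PowerSeries.X * rescale t (exp ℝ) :=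
  Polynomial.bernoulli_generating_function t

lemma coeff_bernGF (t : ℝ) (n : ℕ) :
    (PowerSeries.coeff n) (bernGF t) = ((n.factorial : ℝ))⁻¹ * (B n).eval t := by
  simp only [bernGF, coeff_mk, map_smul]
  rw [Algebra.smul_def]
  congr 1
  · simp [one_div, eq_ratCast, Rat.cast_inv]
  · rw [B, Polynomial.eval_map, Polynomial.aeval_def]

lemma rescale_X (a : ℝ) : rescale a (PowerSeries.X : PowerSeries ℝ) = PowerSeries.C a * PowerSeries.X := by
  ext n
  simp only [coeff_rescale, PowerSeries.coeff_X, PowerSeries.coeff_C_mul]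
  rcases eq_or_ne n 1 with h | h <;> simp [h]

lemma exp_sub_one_ne_zero : (exp ℝ - 1 : PowerSeries ℝ) ≠ 0 := by
  intro h
  have := congrArg (PowerSeries.coeff 1) h
  simp [coeff_exp] at this

theorem bernoulli_raabe (m : ℕ) (hm : 0 < m) (n : ℕ) (x : ℝ) :
    ∑ k ∈ Finset.range m, (B n).eval (x + (k : ℝ) / m)
      = (m : ℝ) ^ ((1 : ℤ) - n) * (B n).eval (m * x) := by
  have hm0 : (m : ℝ) ≠ 0 := Nat.cast_ne_zero.mpr hm.ne'
  set r : PowerSeries ℝ := rescale ((m : ℝ)⁻¹) (exp ℝ) with hr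
  have hrk : ∀ k : ℕ, r ^ k = rescale ((k : ℝ) / m) (exp ℝ) := by
    intro k
    rw [hr, ← map_pow, exp_pow_eq_rescale_exp, rescale_rescale, div_eq_mul_inv]
  have hrm : r ^ m = exp ℝ := by
    rw [hrk m, div_self hm0, rescale_one, RingHom.id_apply]
  -- the sum side
  have hS : (∑ k ∈ Finset.range m, bernGF (x + (k : ℝ) / m)) * (exp ℝ - 1)
      = (PowerSeries.X * rescale x (exp ℝ)) * ∑ k ∈ Finset.range m, r ^ k := by
    rw [Finset.sum_mul, Finset.mul_sum]
    refine Finset.sum_congr rfl fun k _ => ?_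
    rw [bernGF_spec, hrk k, mul_assoc, exp_mul_exp_eq_exp_add]
  -- the rescaled side
  have hG : ((m : ℝ) • rescale ((m : ℝ)⁻¹) (bernGF (m * x))) * (r - 1)
      = PowerSeries.X * rescale x (exp ℝ) := by
    have h := congrArg (rescale ((m : ℝ)⁻¹)) (bernGF_spec ((m : ℝ) * x))
    rw [map_mul, map_sub, map_one, map_mul, rescale_rescale, rescale_X] at h
    have hx : (m : ℝ) * x * (m : ℝ)⁻¹ = x := by field_simp
    rw [hx] at h
    rw [smul_mul_assoc, h, PowerSeries.smul_eq_C_mul, ← mul_assoc, ← mul_assoc, ← map_mul,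
      mul_inv_cancel₀ hm0, map_one, one_mul]
  have hgeom : (r - 1) * ∑ k ∈ Finset.range m, r ^ k = exp ℝ - 1 := by
    rw [mul_comm, geom_sum_mul, hrm]
  have key : (∑ k ∈ Finset.range m, bernGF (x + (k : ℝ) / m))
      = (m : ℝ) • rescale ((m : ℝ)⁻¹) (bernGF (m * x)) := by
    apply mul_right_cancel₀ exp_sub_one_ne_zero
    rw [hS, ← hG, mul_assoc, hgeom]
  have hco := congrArg (PowerSeries.coeff n) key
  simp only [map_sum, coeff_bernGF, map_smul, coeff_rescale, coeff_bernGF, smul_eq_mul] at hco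
  have hfac : ((n.factorial : ℝ)) ≠ 0 := Nat.cast_ne_zero.mpr n.factorial_ne_zero
  have hpow : (m : ℝ) ^ ((1 : ℤ) - n) = (m : ℝ) * ((m : ℝ)⁻¹) ^ n := by
    rw [zpow_sub₀ hm0, zpow_one, zpow_natCast, div_eq_mul_inv, inv_pow]
  rw [hpow]
  refine mul_left_cancel₀ (inv_ne_zero hfac) ?_
  rw [Finset.mul_sum, hco]
  ring
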